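/- arXiv:1912.09468 — 2 statements merged into one kernel-verified Lean document; each statement's English description precedes it below -/
import Mathlib

section
/- Let γ > 0, σ > 0, μ ∈ ℝ and a, b ∈ ℝ with a ≤ b. Set μ_C = μ − 2√3·σ²/γ, μ_D = μ + 2√3·σ²/γ, and define E30 = 1 + (3ab − √3·γ(a+b))/γ², E31 = (2√3·γ − 3(a+b))/γ², E32 = 3/γ², E40 = 1 + (√3·γ(b−a) − 3ab)/γ², E41 = 3(a+b)/γ², E42 = −3/γ², E50 = 1 + (3ab + √3·γ(a+b))/γ², E51 = (2√3·γ + 3(a+b))/γ², E52 = 3/γ². Then ∫_ℝ (1 + √3·|w−a|/γ)·exp(−√3·|w−a|/γ) · (1 + √3·|w−b|/γ)·exp(−√3·|w−b|/γ) · φ_{μ,σ}(w) dw = exp((6σ² + √3·γ(a+b−2μ))/γ²) · ((E30 + E31·μ_C + E32·(μ_C² + σ²)) · Φ((μ_C − b)/σ) + (E31 + E32·(μ_C + b)) · (σ/√(2π)) · exp(−(b−μ_C)²/(2σ²))) + exp(−√3·(b−a)/γ) · ((E40 + E41·μ + E42·(μ² + σ²)) · (Φ((b−μ)/σ) − Φ((a−μ)/σ))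 + (E41 + E42·(μ + a)) · (σ/√(2π)) · exp(−(a−μ)²/(2σ²)) − (E41 + E42·(μ + b)) · (σ/√(2π)) · exp(−(b−μ)²/(2σ²))) + exp((6σ² − √3·γ(a+b−2μ))/γ²) · ((E50 − E51·μ_D + E52·(μ_D² + σ²)) · Φ((a − μ_D)/σ) + (E51 + E52·(−μ_D − a)) · (σ/√(2π)) · exp(−(a−μ_D)²/(2σ²))). -/
/-!
On each of the intervals `(-∞, a]`, `(a, b]`, `(b, ∞)` the absolute values resolve, and the
product of the two Matérn factors becomes a quadratic polynomial in `w` times `exp (l * w + q)`.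
Completing the square, `exp (l * w) * φ_{ν,σ}(w)` is a constant multiple of `φ_{ν + l σ², σ}(w)`,
so each piece is the integral of a quadratic against a normal density. These are explicit since
`(c₀ + c₁ w + c₂ w²) φ_{ν,σ} - (c₀ + c₁ ν + c₂ (ν² + σ²)) φ_{ν,σ}` is the derivative of
`-σ² (c₁ + c₂ (ν + w)) φ_{ν,σ}(w)`, while `∫_{-∞}^t φ_{ν,σ} = Φ((t - ν) / σ)`; the right tail
reduces to a left one under `w ↦ -w`.
-/

open MeasureTheory Real

/-- Standard normal cumulative distribution function. -/
noncomputable def Phi (t : ℝ) : ℝ :=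
  ∫ u in Set.Iic t, (Real.sqrt (2 * Real.pi))⁻¹ * Real.exp (-u ^ 2 / 2)

/-- Normal density with mean μ and standard deviation σ. -/
noncomputable def normalPDF (μ σ x : ℝ) : ℝ :=
  (σ * Real.sqrt (2 * Real.pi))⁻¹ * Real.exp (-(x - μ) ^ 2 / (2 * σ ^ 2))

open Set

theorem integral_Iic_of_hasDerivAt_of_integrableOn {E : Type*} [NormedAddCommGroup E]
    [NormedSpace ℝ E] [CompleteSpace E] {f f' : ℝ → E} {a : ℝ}
    (hderiv : ∀ x ∈ Iic a, HasDerivAt f (f' x) x) (f'int : IntegrableOn f' (Iic a))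
    (fint : IntegrableOn f (Iic a)) :
    ∫ x in Iic a, f' x = f a := by
  simpa using integral_Iic_of_hasDerivAt_of_tendsto' hderiv f'int
    (tendsto_zero_of_hasDerivAt_of_integrableOn_Iic hderiv f'int fint)

theorem setIntegral_Iic_comp_sub_div {E : Type*} [NormedAddCommGroup E] [NormedSpace ℝ E]
    (g : ℝ → E) {σ : ℝ} (hσ : 0 < σ) (ν t : ℝ) :
    ∫ w in Iic t, g ((w - ν) / σ) = σ • ∫ u in Iic ((t - ν) / σ), g u := by
  have hind : (Iic t).indicator (fun w => g ((w - ν) / σ))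
      = fun w => (Iic ((t - ν) / σ)).indicator g ((w - ν) / σ) := by
    ext w
    simp only [indicator, mem_Iic, div_le_div_iff_of_pos_right hσ, sub_le_sub_iff_right]
  rw [← integral_indicator measurableSet_Iic, ← integral_indicator measurableSet_Iic, hind,
    integral_sub_right_eq_self (fun x => (Iic ((t - ν) / σ)).indicator g (x / σ)),
    Measure.integral_comp_div, abs_of_pos hσ]

theorem integral_eq_Iic_add_Ioc_add_Ioi {E : Type*} [NormedAddCommGroup E] [NormedSpace ℝ E]
    {f : ℝ → E} (hf : Integrable f) {a b : ℝ} (hab : a ≤ b) :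
    ∫ x, f x = (∫ x in Iic a, f x) + (∫ x in Ioc a b, f x) + ∫ x in Ioi b, f x := by
  rw [← setIntegral_univ, ← Iic_union_Ioi (a := a), setIntegral_union (Iic_disjoint_Ioi le_rfl)
    measurableSet_Ioi hf.integrableOn hf.integrableOn, ← Ioc_union_Ioi_eq_Ioi hab,
    setIntegral_union (Ioc_disjoint_Ioi le_rfl) measurableSet_Ioi hf.integrableOn hf.integrableOn,
    add_assoc]

section NormalDensity

theorem normalPDF_neg (ν σ w : ℝ) : normalPDF ν σ (-w) = normalPDF (-ν) σ w := by
  simp only [normalPDF]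
  ring_nf

theorem hasDerivAt_normalPDF (ν σ w : ℝ) :
    HasDerivAt (normalPDF ν σ) (-((w - ν) / σ ^ 2) * normalPDF ν σ w) w := by
  have h := ((((hasDerivAt_id w).sub_const ν).pow 2).neg.div_const (2 * σ ^ 2)).exp.const_mul
    (σ * √(2 * π))⁻¹
  refine h.congr_deriv ?_
  simp only [normalPDF, id, Pi.neg_apply, Pi.pow_apply]
  ring

variable {ν σ : ℝ}

theorem exp_mul_normalPDF (l q : ℝ) (hσ : σ ≠ 0) (w : ℝ) :
    exp (l * w + q) * normalPDF ν σ w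
      = exp (q + l * ν + l ^ 2 * σ ^ 2 / 2) * normalPDF (ν + l * σ ^ 2) σ w := by
  simp only [normalPDF]
  rw [mul_left_comm, ← exp_add, mul_left_comm (exp _), ← exp_add]
  congr 2
  field_simp
  ring

variable (ν) in
theorem integrable_sub_pow_mul_normalPDF (k : ℕ) (hσ : σ ≠ 0) :
    Integrable (fun w => (w - ν) ^ k * normalPDF ν σ w) := by
  have := ((integrable_rpow_mul_exp_neg_mul_sq (b := (2 * σ ^ 2)⁻¹) (by positivity)
    (s := k) (neg_one_lt_zero.trans_le k.cast_nonneg)).comp_sub_right ν).const_mul (σ * √(2 * π))⁻¹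
  refine this.congr (ae_of_all _ fun w => ?_)
  simp only [rpow_natCast, normalPDF]
  ring_nf

variable (ν) in
theorem integrable_normalPDF (hσ : σ ≠ 0) : Integrable (normalPDF ν σ) := by
  simpa using integrable_sub_pow_mul_normalPDF ν 0 hσ

theorem integrable_quadratic_mul_normalPDF (c₀ c₁ c₂ : ℝ) (hσ : σ ≠ 0) :
    Integrable (fun w => (c₀ + c₁ * w + c₂ * w ^ 2) * normalPDF ν σ w) := by
  have := (((integrable_sub_pow_mul_normalPDF ν 0 hσ).const_mul
    (c₀ + c₁ * ν + c₂ * ν ^ 2)).add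
    ((integrable_sub_pow_mul_normalPDF ν 1 hσ).const_mul (c₁ + 2 * c₂ * ν))).add
    ((integrable_sub_pow_mul_normalPDF ν 2 hσ).const_mul c₂)
  exact this.congr (ae_of_all _ fun w => by simp only [Pi.add_apply]; ring)

theorem integral_Iic_normalPDF (hσ : 0 < σ) (t : ℝ) :
    ∫ w in Iic t, normalPDF ν σ w = Phi ((t - ν) / σ) := by
  have h : ∀ w, normalPDF ν σ w = σ⁻¹ * ((√(2 * π))⁻¹ * exp (-((w - ν) / σ) ^ 2 / 2)) := by
    intro w
    rw [normalPDF, mul_inv, mul_assoc]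
    congr 3
    field_simp
  simp_rw [h]
  rw [integral_const_mul,
    setIntegral_Iic_comp_sub_div (fun u => (√(2 * π))⁻¹ * exp (-u ^ 2 / 2)) hσ,
    smul_eq_mul, inv_mul_cancel_left₀ hσ.ne', Phi]

theorem hasDerivAt_affine_mul_normalPDF (c₁ c₂ : ℝ) (hσ : σ ≠ 0) (w : ℝ) :
    HasDerivAt (fun x => -σ ^ 2 * (c₁ + c₂ * (ν + x)) * normalPDF ν σ x)
      ((-(c₁ * ν + c₂ * (ν ^ 2 + σ ^ 2)) + c₁ * w + c₂ * w ^ 2) * normalPDF ν σ w) w := by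
  have := ((((hasDerivAt_id w).const_add ν).const_mul c₂).const_add c₁).const_mul (-σ ^ 2)
    |>.mul (hasDerivAt_normalPDF ν σ w)
  refine this.congr_deriv ?_
  simp only [id]
  field_simp
  ring

theorem integral_Iic_quadratic_mul_normalPDF (c₀ c₁ c₂ : ℝ) (hσ : 0 < σ) (t : ℝ) :
    ∫ w in Iic t, (c₀ + c₁ * w + c₂ * w ^ 2) * normalPDF ν σ w
      = (c₀ + c₁ * ν + c₂ * (ν ^ 2 + σ ^ 2)) * Phi ((t - ν) / σ)
        - (c₁ + c₂ * (ν + t)) * (σ / √(2 * π)) * exp (-(t - ν) ^ 2 / (2 * σ ^ 2)) := by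
  have hFTC := integral_Iic_of_hasDerivAt_of_integrableOn (a := t)
    (fun w _ => hasDerivAt_affine_mul_normalPDF (ν := ν) c₁ c₂ hσ.ne' w)
    (integrable_quadratic_mul_normalPDF _ _ _ hσ.ne').integrableOn
    ((integrable_quadratic_mul_normalPDF (-σ ^ 2 * (c₁ + c₂ * ν)) (-σ ^ 2 * c₂) 0 hσ.ne').congr
      (ae_of_all _ fun w => by ring)).integrableOn
  have hsplit : ∀ w, (c₀ + c₁ * w + c₂ * w ^ 2) * normalPDF ν σ w
      = (c₀ + c₁ * ν + c₂ * (ν ^ 2 + σ ^ 2)) * normalPDF ν σ w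
        + (-(c₁ * ν + c₂ * (ν ^ 2 + σ ^ 2)) + c₁ * w + c₂ * w ^ 2) * normalPDF ν σ w :=
    fun w => by ring
  simp_rw [hsplit]
  rw [integral_add ((integrable_normalPDF ν hσ.ne').const_mul _).integrableOn
    (integrable_quadratic_mul_normalPDF _ _ _ hσ.ne').integrableOn, integral_const_mul,
    integral_Iic_normalPDF hσ, hFTC, normalPDF]
  field_simp
  ring

theorem integral_Ioi_quadratic_mul_normalPDF (c₀ c₁ c₂ : ℝ) (hσ : 0 < σ) (t : ℝ) :
    ∫ w in Ioi t, (c₀ + c₁ * w + c₂ * w ^ 2) * normalPDF ν σ w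
      = (c₀ + c₁ * ν + c₂ * (ν ^ 2 + σ ^ 2)) * Phi ((ν - t) / σ)
        + (c₁ + c₂ * (ν + t)) * (σ / √(2 * π)) * exp (-(t - ν) ^ 2 / (2 * σ ^ 2)) := by
  have hneg := integral_comp_neg_Iic (-t) fun w => (c₀ + c₁ * w + c₂ * w ^ 2) * normalPDF ν σ w
  have hreflect : ∀ x : ℝ, (c₀ + c₁ * -x + c₂ * (-x) ^ 2) * normalPDF ν σ (-x)
      = (c₀ + -c₁ * x + c₂ * x ^ 2) * normalPDF (-ν) σ x := fun x => by
    rw [normalPDF_neg]; ring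
  rw [neg_neg] at hneg
  simp_rw [← hneg, hreflect, integral_Iic_quadratic_mul_normalPDF _ _ _ hσ,
    show -t - -ν = ν - t by ring, show (ν - t) ^ 2 = (t - ν) ^ 2 by ring]
  ring

theorem integral_Ioc_quadratic_mul_normalPDF (c₀ c₁ c₂ : ℝ) (hσ : 0 < σ) {a b : ℝ}
    (hab : a ≤ b) :
    ∫ w in Ioc a b, (c₀ + c₁ * w + c₂ * w ^ 2) * normalPDF ν σ w
      = (c₀ + c₁ * ν + c₂ * (ν ^ 2 + σ ^ 2)) * (Phi ((b - ν) / σ) - Phi ((a - ν) / σ))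
        + (c₁ + c₂ * (ν + a)) * (σ / √(2 * π)) * exp (-(a - ν) ^ 2 / (2 * σ ^ 2))
        - (c₁ + c₂ * (ν + b)) * (σ / √(2 * π)) * exp (-(b - ν) ^ 2 / (2 * σ ^ 2)) := by
  have hint := integrable_quadratic_mul_normalPDF (ν := ν) c₀ c₁ c₂ hσ.ne'
  have hunion := setIntegral_union (Iic_disjoint_Ioc (le_refl a) (c := b)) measurableSet_Ioc
    hint.integrableOn hint.integrableOn
  rw [Iic_union_Ioc_eq_Iic hab, integral_Iic_quadratic_mul_normalPDF _ _ _ hσ,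
    integral_Iic_quadratic_mul_normalPDF _ _ _ hσ] at hunion
  linarith

end NormalDensity

noncomputable def matern15 (γ w a : ℝ) : ℝ :=
  (1 + √3 * |w - a| / γ) * exp (-√3 * |w - a| / γ)

section Matern

variable {γ w a : ℝ}

theorem matern15_of_mem_Ici (h : w ∈ Ici a) :
    matern15 γ w a = (1 + √3 * (w - a) / γ) * exp (-√3 * (w - a) / γ) := by
  rw [matern15, abs_of_nonneg (sub_nonneg.2 h)]

theorem matern15_of_mem_Iic (h : w ∈ Iic a) :
    matern15 γ w a = (1 - √3 * (w - a) / γ) * exp (√3 * (w - a) / γ) := by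
  rw [matern15, abs_of_nonpos (sub_nonpos.2 h)]
  ring_nf

theorem matern15_nonneg (hγ : 0 < γ) : 0 ≤ matern15 γ w a := by
  unfold matern15
  positivity

theorem matern15_le_one : matern15 γ w a ≤ 1 := by
  set x := √3 * |w - a| / γ
  calc matern15 γ w a = (x + 1) * exp (-x) := by rw [matern15, neg_mul, neg_div, add_comm]
    _ ≤ exp x * exp (-x) := by gcongr; exact add_one_le_exp x
    _ = 1 := by rw [← exp_add, add_neg_cancel, exp_zero]

theorem continuous_matern15 : Continuous fun w => matern15 γ w a := by
  unfold matern15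
  fun_prop

variable {b μ σ : ℝ}

theorem integrable_matern15_mul_matern15_mul_normalPDF (hγ : 0 < γ) (hσ : σ ≠ 0) :
    Integrable fun w => matern15 γ w a * matern15 γ w b * normalPDF μ σ w := by
  refine (integrable_normalPDF μ hσ).bdd_mul (c := 1)
    (continuous_matern15.mul continuous_matern15).aestronglyMeasurable (ae_of_all _ fun w => ?_)
  rw [norm_mul, Real.norm_of_nonneg (matern15_nonneg hγ), Real.norm_of_nonneg (matern15_nonneg hγ)]
  exact mul_le_one₀ matern15_le_one (matern15_nonneg hγ) matern15_le_one

theorem matern15_mul_matern15_mul_normalPDF_of_mem_Iic (hγ : γ ≠ 0) (hσ : σ ≠ 0)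
    (hab : a ≤ b) (hw : w ∈ Iic a) :
    matern15 γ w a * matern15 γ w b * normalPDF μ σ w
      = exp ((6 * σ ^ 2 - √3 * γ * (a + b - 2 * μ)) / γ ^ 2)
        * ((1 + (3 * a * b + √3 * γ * (a + b)) / γ ^ 2
            + -((2 * √3 * γ + 3 * (a + b)) / γ ^ 2) * w + 3 / γ ^ 2 * w ^ 2)
          * normalPDF (μ + 2 * √3 * σ ^ 2 / γ) σ w) := by
  have h3 : √3 ^ 2 = 3 := sq_sqrt (by norm_num)
  have hexp : exp (√3 * (w - a) / γ) * exp (√3 * (w - b) / γ)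
      = exp (2 * √3 / γ * w + -(√3 * (a + b) / γ)) := by
    rw [← exp_add]; ring_nf
  have hq : -(√3 * (a + b) / γ) + 2 * √3 / γ * μ + (2 * √3 / γ) ^ 2 * σ ^ 2 / 2
      = (6 * σ ^ 2 - √3 * γ * (a + b - 2 * μ)) / γ ^ 2 := by
    field_simp
    linear_combination (2 * σ ^ 2) * h3
  have hP : (1 - √3 * (w - a) / γ) * (1 - √3 * (w - b) / γ)
      = 1 + (3 * a * b + √3 * γ * (a + b)) / γ ^ 2
        + -((2 * √3 * γ + 3 * (a + b)) / γ ^ 2) * w + 3 / γ ^ 2 * w ^ 2 := by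
    field_simp
    linear_combination (w - a) * (w - b) * h3
  rw [matern15_of_mem_Iic hw, matern15_of_mem_Iic (hw.trans hab), ← hP]
  calc _ = (1 - √3 * (w - a) / γ) * (1 - √3 * (w - b) / γ)
        * (exp (2 * √3 / γ * w + -(√3 * (a + b) / γ)) * normalPDF μ σ w) := by rw [← hexp]; ring
    _ = _ := by
      rw [exp_mul_normalPDF _ _ hσ, hq,
        show μ + 2 * √3 / γ * σ ^ 2 = μ + 2 * √3 * σ ^ 2 / γ by ring]
      ring

theorem matern15_mul_matern15_mul_normalPDF_of_mem_Icc (hγ : γ ≠ 0) (hw : w ∈ Icc a b) :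
    matern15 γ w a * matern15 γ w b * normalPDF μ σ w
      = exp (-√3 * (b - a) / γ)
        * ((1 + (√3 * γ * (b - a) - 3 * a * b) / γ ^ 2
            + 3 * (a + b) / γ ^ 2 * w + -3 / γ ^ 2 * w ^ 2) * normalPDF μ σ w) := by
  have h3 : √3 ^ 2 = 3 := sq_sqrt (by norm_num)
  have hexp : exp (-√3 * (w - a) / γ) * exp (√3 * (w - b) / γ) = exp (-√3 * (b - a) / γ) := by
    rw [← exp_add]; ring_nf
  have hP : (1 + √3 * (w - a) / γ) * (1 - √3 * (w - b) / γ)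
      = 1 + (√3 * γ * (b - a) - 3 * a * b) / γ ^ 2
        + 3 * (a + b) / γ ^ 2 * w + -3 / γ ^ 2 * w ^ 2 := by
    field_simp
    linear_combination -(w - a) * (w - b) * h3
  rw [matern15_of_mem_Ici hw.1, matern15_of_mem_Iic hw.2, ← hP, ← hexp]
  ring

theorem matern15_mul_matern15_mul_normalPDF_of_mem_Ici (hγ : γ ≠ 0) (hσ : σ ≠ 0)
    (hab : a ≤ b) (hw : w ∈ Ici b) :
    matern15 γ w a * matern15 γ w b * normalPDF μ σ w
      = exp ((6 * σ ^ 2 + √3 * γ * (a + b - 2 * μ)) / γ ^ 2)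
        * ((1 + (3 * a * b - √3 * γ * (a + b)) / γ ^ 2
            + (2 * √3 * γ - 3 * (a + b)) / γ ^ 2 * w + 3 / γ ^ 2 * w ^ 2)
          * normalPDF (μ - 2 * √3 * σ ^ 2 / γ) σ w) := by
  have h3 : √3 ^ 2 = 3 := sq_sqrt (by norm_num)
  have hexp : exp (-√3 * (w - a) / γ) * exp (-√3 * (w - b) / γ)
      = exp (-2 * √3 / γ * w + √3 * (a + b) / γ) := by
    rw [← exp_add]; ring_nf
  have hq : √3 * (a + b) / γ + -2 * √3 / γ * μ + (-2 * √3 / γ) ^ 2 * σ ^ 2 / 2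
      = (6 * σ ^ 2 + √3 * γ * (a + b - 2 * μ)) / γ ^ 2 := by
    field_simp
    linear_combination (2 * σ ^ 2) * h3
  have hP : (1 + √3 * (w - a) / γ) * (1 + √3 * (w - b) / γ)
      = 1 + (3 * a * b - √3 * γ * (a + b)) / γ ^ 2
        + (2 * √3 * γ - 3 * (a + b)) / γ ^ 2 * w + 3 / γ ^ 2 * w ^ 2 := by
    field_simp
    linear_combination (w - a) * (w - b) * h3
  rw [matern15_of_mem_Ici (hab.trans hw), matern15_of_mem_Ici hw, ← hP]
  calc _ = (1 + √3 * (w - a) / γ) * (1 + √3 * (w - b) / γ)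
        * (exp (-2 * √3 / γ * w + √3 * (a + b) / γ) * normalPDF μ σ w) := by rw [← hexp]; ring
    _ = _ := by
      rw [exp_mul_normalPDF _ _ hσ, hq,
        show μ + -2 * √3 / γ * σ ^ 2 = μ - 2 * √3 * σ ^ 2 / γ by ring]
      ring

end Matern

theorem integral_matern15_sq_mul_normalPDF (γ σ μ a b μC μD : ℝ)
    (E30 E31 E32 E40 E41 E42 E50 E51 E52 : ℝ)
    (hγ : 0 < γ) (hσ : 0 < σ) (hab : a ≤ b)
    (hμC : μC = μ - 2 * Real.sqrt 3 * σ ^ 2 / γ)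
    (hμD : μD = μ + 2 * Real.sqrt 3 * σ ^ 2 / γ)
    (hE30 : E30 = 1 + (3 * a * b - Real.sqrt 3 * γ * (a + b)) / γ ^ 2)
    (hE31 : E31 = (2 * Real.sqrt 3 * γ - 3 * (a + b)) / γ ^ 2)
    (hE32 : E32 = 3 / γ ^ 2)
    (hE40 : E40 = 1 + (Real.sqrt 3 * γ * (b - a) - 3 * a * b) / γ ^ 2)
    (hE41 : E41 = 3 * (a + b) / γ ^ 2)
    (hE42 : E42 = -3 / γ ^ 2)
    (hE50 : E50 = 1 + (3 * a * b + Real.sqrt 3 * γ * (a + b)) / γ ^ 2)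
    (hE51 : E51 = (2 * Real.sqrt 3 * γ + 3 * (a + b)) / γ ^ 2)
    (hE52 : E52 = 3 / γ ^ 2) :
    ∫ w : ℝ,
        (1 + Real.sqrt 3 * |w - a| / γ) * Real.exp (-(Real.sqrt 3) * |w - a| / γ) *
          ((1 + Real.sqrt 3 * |w - b| / γ) * Real.exp (-(Real.sqrt 3) * |w - b| / γ)) *
          normalPDF μ σ w =
      Real.exp ((6 * σ ^ 2 + Real.sqrt 3 * γ * (a + b - 2 * μ)) / γ ^ 2) *
        ((E30 + E31 * μC + E32 * (μC ^ 2 + σ ^ 2)) * Phi ((μC - b) / σ) +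
          (E31 + E32 * (μC + b)) * (σ / Real.sqrt (2 * Real.pi)) *
            Real.exp (-(b - μC) ^ 2 / (2 * σ ^ 2))) +
      Real.exp (-(Real.sqrt 3) * (b - a) / γ) *
        ((E40 + E41 * μ + E42 * (μ ^ 2 + σ ^ 2)) * (Phi ((b - μ) / σ) - Phi ((a - μ) / σ)) +
          (E41 + E42 * (μ + a)) * (σ / Real.sqrt (2 * Real.pi)) *
            Real.exp (-(a - μ) ^ 2 / (2 * σ ^ 2)) -
          (E41 + E42 * (μ + b)) * (σ / Real.sqrt (2 * Real.pi)) *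
            Real.exp (-(b - μ) ^ 2 / (2 * σ ^ 2))) +
      Real.exp ((6 * σ ^ 2 - Real.sqrt 3 * γ * (a + b - 2 * μ)) / γ ^ 2) *
        ((E50 - E51 * μD + E52 * (μD ^ 2 + σ ^ 2)) * Phi ((a - μD) / σ) +
          (E51 + E52 * (-μD - a)) * (σ / Real.sqrt (2 * Real.pi)) *
            Real.exp (-(a - μD) ^ 2 / (2 * σ ^ 2))) := by

  subst hμC hμD hE30 hE31 hE32 hE40 hE41 hE42 hE50 hE51 hE52
  change ∫ w, matern15 γ w a * matern15 γ w b * normalPDF μ σ w = _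
  rw [integral_eq_Iic_add_Ioc_add_Ioi
      (integrable_matern15_mul_matern15_mul_normalPDF hγ hσ.ne') hab,
    setIntegral_congr_fun measurableSet_Iic fun w hw =>
      matern15_mul_matern15_mul_normalPDF_of_mem_Iic hγ.ne' hσ.ne' hab hw,
    setIntegral_congr_fun measurableSet_Ioc fun w hw =>
      matern15_mul_matern15_mul_normalPDF_of_mem_Icc hγ.ne' (Ioc_subset_Icc_self hw),
    setIntegral_congr_fun measurableSet_Ioi fun w hw =>
      matern15_mul_matern15_mul_normalPDF_of_mem_Ici hγ.ne' hσ.ne' hab (Ioi_subset_Ici_self hw),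
    integral_const_mul, integral_const_mul, integral_const_mul,
    integral_Iic_quadratic_mul_normalPDF _ _ _ hσ,
    integral_Ioc_quadratic_mul_normalPDF _ _ _ hσ hab,
    integral_Ioi_quadratic_mul_normalPDF _ _ _ hσ]
  ring
end

section
/- Let γ > 0, σ > 0 and μ, a ∈ ℝ. Set μ_A = μ − √5·σ²/γ, μ_B = μ + √5·σ²/γ, e10 = 1 − √5·a/γ + 5a²/(3γ²), e11 = √5/γ − 10a/(3γ²), e12 = 5/(3γ²), e20 = 1 + √5·a/γ + 5a²/(3γ²), e21 = √5/γ + 10a/(3γ²), e22 = 5/(3γ²). Then ∫_ℝ w · (1 + √5·|w−a|/γ + 5(w−a)²/(3γ²)) · exp(−√5·|w−a|/γ) · φ_{μ,σ}(w) dw = exp((5σ² + 2√5·γ(a−μ))/(2γ²)) · ((e10·μ_A + e11·(μ_A² + σ²) + e12·(μ_A³ + 3σ²μ_A)) · Φ((μ_A − a)/σ) + (e10 + e11·(μ_A + a) + e12·(μ_A² + 2σ² + a² + μ_A·a)) · (σ/√(2π)) · exp(−(a−μ_A)²/(2σ²))) − exp((5σ² − 2√5·γ(a−μ))/(2γ²))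 · ((−e20·μ_B + e21·(μ_B² + σ²) + e22·(−μ_B³ − 3σ²μ_B)) · Φ((a − μ_B)/σ) + (e20 + e21·(−μ_B − a) + e22·(μ_B² + 2σ² + a² + μ_B·a)) · (σ/√(2π)) · exp(−(a−μ_B)²/(2σ²))). -/
open MeasureTheory Real

/-!
On each side of `a` the sign of `w - a` is fixed, so the integrand is a cubic in `w` times
`exp (± √5 w / γ) · φ_{μ,σ}(w)`; completing the square turns this product into a constant multiple
of the shifted density `φ_{μ ∓ √5 σ² / γ, σ}`. It remains to integrate a cubic against a normal
density over a half-line, which is done with the explicit antiderivative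
`E p(W) · Φ((w - m) / s) - Q(w) · φ_{m,s}(w)`, `Q` solving Stein's equation for `p`.
-/

open Filter Set Polynomial
open scoped Topology

lemma integrable_eval_mul_exp_neg_mul_sq {b : ℝ} (hb : 0 < b) (P : ℝ[X]) :
    Integrable fun x : ℝ => P.eval x * exp (-b * x ^ 2) := by
  induction P using Polynomial.induction_on' with
  | add P Q hP hQ => simp only [eval_add, add_mul]; exact hP.add hQ
  | monomial n c =>
    have h := integrable_rpow_mul_exp_neg_mul_sq hb (neg_one_lt_zero.trans_le n.cast_nonneg)
    simpa only [eval_monomial, rpow_natCast, mul_assoc] using h.const_mul c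

lemma tendsto_eval_mul_exp_neg_mul_sq_cocompact {b : ℝ} (hb : 0 < b) (P : ℝ[X]) :
    Tendsto (fun x : ℝ => P.eval x * exp (-b * x ^ 2)) (cocompact ℝ) (𝓝 0) := by
  induction P using Polynomial.induction_on' with
  | add P Q hP hQ => simpa only [eval_add, add_mul, add_zero] using hP.add hQ
  | monomial n c =>
    have h : Tendsto (fun x : ℝ => x ^ n * exp (-b * x ^ 2)) (cocompact ℝ) (𝓝 0) := by
      refine tendsto_zero_iff_norm_tendsto_zero.2 ?_
      simpa only [norm_mul, norm_pow, Real.norm_eq_abs, abs_exp, rpow_natCast] using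
        tendsto_rpow_abs_mul_exp_neg_mul_sq_cocompact hb n
    simpa only [eval_monomial, mul_assoc, mul_zero] using h.const_mul c

lemma eval_mul_normalPDF_eq_eval_comp_mul_exp (P : ℝ[X]) (m s x : ℝ) :
    P.eval x * normalPDF m s x = (C (s * √(2 * π))⁻¹ * P.comp (X + C m)).eval (x - m) *
      exp (-(2 * s ^ 2)⁻¹ * (x - m) ^ 2) := by
  simp only [normalPDF, eval_mul, eval_C, eval_comp, eval_add, eval_X, sub_add_cancel]
  ring_nf

lemma integrable_eval_mul_normalPDF (P : ℝ[X]) (m : ℝ) {s : ℝ} (hs : s ≠ 0) :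
    Integrable fun x => P.eval x * normalPDF m s x := by
  simp only [eval_mul_normalPDF_eq_eval_comp_mul_exp]
  exact (integrable_eval_mul_exp_neg_mul_sq (by positivity) _).comp_sub_right m

lemma tendsto_eval_mul_normalPDF_cocompact (P : ℝ[X]) (m : ℝ) {s : ℝ} (hs : s ≠ 0) :
    Tendsto (fun x => P.eval x * normalPDF m s x) (cocompact ℝ) (𝓝 0) := by
  simp only [eval_mul_normalPDF_eq_eval_comp_mul_exp]
  exact (tendsto_eval_mul_exp_neg_mul_sq_cocompact (by positivity) _).comp
    (Homeomorph.subRight m).map_cocompact.le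

lemma integrable_normalPDF_s15 (m : ℝ) {s : ℝ} (hs : s ≠ 0) : Integrable (normalPDF m s) := by
  simpa using integrable_eval_mul_normalPDF 1 m hs

lemma normalPDF_neg_s15 (m s x : ℝ) : normalPDF m (-s) x = -normalPDF m s x := by
  simp [normalPDF, neg_mul, inv_neg]

lemma Phi_eq_setIntegral_normalPDF (t : ℝ) : Phi t = ∫ u in Iic t, normalPDF 0 1 u := by
  simp [Phi, normalPDF]

lemma Phi_eq_add_intervalIntegral (t : ℝ) : Phi t = Phi 0 + ∫ u in 0..t, normalPDF 0 1 u := by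
  have h {t : ℝ} : IntegrableOn (normalPDF 0 1) (Iic t) :=
    (integrable_normalPDF_s15 0 one_ne_zero).integrableOn
  rw [Phi_eq_setIntegral_normalPDF, Phi_eq_setIntegral_normalPDF,
    ← intervalIntegral.integral_Iic_sub_Iic h h]
  ring

lemma hasDerivAt_Phi (t : ℝ) : HasDerivAt Phi (normalPDF 0 1 t) t := by
  rw [show Phi = fun t => Phi 0 + ∫ u in 0..t, normalPDF 0 1 u from
    funext Phi_eq_add_intervalIntegral]
  have hc : Continuous (normalPDF 0 1) := by unfold normalPDF; fun_prop
  exact (intervalIntegral.integral_hasDerivAt_right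
    (integrable_normalPDF_s15 0 one_ne_zero).intervalIntegrable
    (hc.stronglyMeasurableAtFilter _ _) hc.continuousAt).const_add _

lemma tendsto_Phi_atBot : Tendsto Phi atBot (𝓝 0) := by
  have h := intervalIntegral_tendsto_integral_Iic 0
    (integrable_normalPDF_s15 0 one_ne_zero).integrableOn tendsto_id
  have h' := h.const_sub (Phi 0)
  rw [← Phi_eq_setIntegral_normalPDF, sub_self] at h'
  refine h'.congr fun t => ?_
  rw [Phi_eq_add_intervalIntegral t, intervalIntegral.integral_symm, id]
  ring

lemma hasDerivAt_Phi_sub_div (m : ℝ) {s : ℝ} (hs : s ≠ 0) (x : ℝ) :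
    HasDerivAt (fun w => Phi ((w - m) / s)) (normalPDF m s x) x := by
  have h := (hasDerivAt_Phi ((x - m) / s)).comp x (((hasDerivAt_id x).sub_const m).div_const s)
  refine h.congr_deriv ?_
  simp only [normalPDF, sub_zero, one_pow, mul_one, one_mul]
  field_simp

lemma hasDerivAt_normalPDF_s15 (m : ℝ) {s : ℝ} (hs : s ≠ 0) (x : ℝ) :
    HasDerivAt (normalPDF m s) (-((x - m) / s ^ 2) * normalPDF m s x) x := by
  have h := ((((hasDerivAt_id x).sub_const m).pow 2).neg.div_const (2 * s ^ 2)).exp.const_mul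
    (s * √(2 * π))⁻¹
  refine h.congr_deriv ?_
  simp only [normalPDF, id, Pi.pow_apply, Pi.neg_apply]
  field_simp
  ring

/-- The mean of `c₀ + c₁ W + c₂ W² + c₃ W³` for `W ~ N(m, s²)`. -/
def cubicGaussianMean (m s c0 c1 c2 c3 : ℝ) : ℝ :=
  c0 + c1 * m + c2 * (m ^ 2 + s ^ 2) + c3 * (m ^ 3 + 3 * s ^ 2 * m)

/-- The quadratic `Q` solving Stein's equation `Q' - (x - m) / s² · Q = E p(W) - p` for the cubic
`p = c₀ + c₁ X + c₂ X² + c₃ X³`, so that `(Q · φ_{m,s})' = (E p(W) - p) · φ_{m,s}`. -/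
def cubicGaussianStein (m s c1 c2 c3 x : ℝ) : ℝ :=
  s ^ 2 * (c1 + c2 * m + c3 * (m ^ 2 + 2 * s ^ 2) + (c2 + c3 * m) * x + c3 * x ^ 2)

section CubicMoments

variable (m : ℝ) {s : ℝ} (c0 c1 c2 c3 : ℝ)

lemma hasDerivAt_cubicGaussianStein_mul_normalPDF (hs : s ≠ 0) (x : ℝ) :
    HasDerivAt (fun w => cubicGaussianStein m s c1 c2 c3 w * normalPDF m s w)
      ((cubicGaussianMean m s c0 c1 c2 c3 - (c0 + c1 * x + c2 * x ^ 2 + c3 * x ^ 3)) *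
        normalPDF m s x) x := by
  have hQ : HasDerivAt (cubicGaussianStein m s c1 c2 c3)
      (s ^ 2 * (c2 + c3 * m + 2 * c3 * x)) x := by
    have := ((((hasDerivAt_id x).const_mul (c2 + c3 * m)).const_add
      (c1 + c2 * m + c3 * (m ^ 2 + 2 * s ^ 2))).add ((hasDerivAt_pow 2 x).const_mul c3)).const_mul
      (s ^ 2)
    exact this.congr_deriv (by simp only [Nat.cast_ofNat]; ring)
  refine (hQ.mul (hasDerivAt_normalPDF_s15 m hs x)).congr_deriv ?_
  simp only [cubicGaussianMean, cubicGaussianStein]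
  field_simp
  ring

lemma integrable_cubic_mul_normalPDF (hs : s ≠ 0) :
    Integrable fun w => (c0 + c1 * w + c2 * w ^ 2 + c3 * w ^ 3) * normalPDF m s w := by
  refine (integrable_eval_mul_normalPDF (C c0 + C c1 * X + C c2 * X ^ 2 + C c3 * X ^ 3) m hs).congr
    (ae_of_all _ fun w => ?_)
  simp

lemma tendsto_cubicGaussianStein_mul_normalPDF_cocompact (hs : s ≠ 0) :
    Tendsto (fun w => cubicGaussianStein m s c1 c2 c3 w * normalPDF m s w) (cocompact ℝ)
      (𝓝 0) := by
  have h := tendsto_eval_mul_normalPDF_cocompact (C (s ^ 2) *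
    (C (c1 + c2 * m + c3 * (m ^ 2 + 2 * s ^ 2)) + C (c2 + c3 * m) * X + C c3 * X ^ 2)) m hs
  refine h.congr fun w => ?_
  simp only [cubicGaussianStein, eval_mul, eval_add, eval_C, eval_X, eval_pow]

theorem integral_Iic_cubic_mul_normalPDF (hs : 0 < s) (t : ℝ) :
    ∫ w in Iic t, (c0 + c1 * w + c2 * w ^ 2 + c3 * w ^ 3) * normalPDF m s w =
      cubicGaussianMean m s c0 c1 c2 c3 * Phi ((t - m) / s) -
        cubicGaussianStein m s c1 c2 c3 t * normalPDF m s t := by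
  have hderiv (x : ℝ) : HasDerivAt (fun w => cubicGaussianMean m s c0 c1 c2 c3 *
      Phi ((w - m) / s) - cubicGaussianStein m s c1 c2 c3 w * normalPDF m s w)
      ((c0 + c1 * x + c2 * x ^ 2 + c3 * x ^ 3) * normalPDF m s x) x :=
    (((hasDerivAt_Phi_sub_div m hs.ne' x).const_mul _).sub
      (hasDerivAt_cubicGaussianStein_mul_normalPDF m c0 c1 c2 c3 hs.ne' x)).congr_deriv (by ring)
  have hlim : Tendsto (fun w => cubicGaussianMean m s c0 c1 c2 c3 * Phi ((w - m) / s) -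
      cubicGaussianStein m s c1 c2 c3 w * normalPDF m s w) atBot (𝓝 0) := by
    have hPhi := (tendsto_Phi_atBot.comp ((tendsto_atBot_add_const_right _ (-m)
      tendsto_id).atBot_div_const hs)).const_mul (cubicGaussianMean m s c0 c1 c2 c3)
    simpa [← sub_eq_add_neg] using hPhi.sub
      ((tendsto_cubicGaussianStein_mul_normalPDF_cocompact m c1 c2 c3 hs.ne').mono_left
        atBot_le_cocompact)
  rw [integral_Iic_of_hasDerivAt_of_tendsto' (fun x _ => hderiv x)
    (integrable_cubic_mul_normalPDF m c0 c1 c2 c3 hs.ne').integrableOn hlim, sub_zero]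

theorem integral_Ioi_cubic_mul_normalPDF (hs : 0 < s) (t : ℝ) :
    ∫ w in Ioi t, (c0 + c1 * w + c2 * w ^ 2 + c3 * w ^ 3) * normalPDF m s w =
      cubicGaussianMean m s c0 c1 c2 c3 * Phi ((m - t) / s) +
        cubicGaussianStein m s c1 c2 c3 t * normalPDF m s t := by
  have hderivPhi (x : ℝ) : HasDerivAt (fun w => Phi ((m - w) / s)) (-normalPDF m s x) x := by
    simp only [← normalPDF_neg_s15, ← neg_div_neg_eq (m - _) s, neg_sub]
    exact hasDerivAt_Phi_sub_div m (neg_ne_zero.2 hs.ne') x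
  have hderiv (x : ℝ) : HasDerivAt (fun w => -(cubicGaussianMean m s c0 c1 c2 c3 *
      Phi ((m - w) / s)) - cubicGaussianStein m s c1 c2 c3 w * normalPDF m s w)
      ((c0 + c1 * x + c2 * x ^ 2 + c3 * x ^ 3) * normalPDF m s x) x :=
    (((hderivPhi x).const_mul _).neg.sub
      (hasDerivAt_cubicGaussianStein_mul_normalPDF m c0 c1 c2 c3 hs.ne' x)).congr_deriv (by ring)
  have hlim : Tendsto (fun w => -(cubicGaussianMean m s c0 c1 c2 c3 * Phi ((m - w) / s)) -
      cubicGaussianStein m s c1 c2 c3 w * normalPDF m s w) atTop (𝓝 0) := by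
    have hPhi := (tendsto_Phi_atBot.comp ((tendsto_atBot_add_const_left _ m
      tendsto_neg_atTop_atBot).atBot_div_const hs)).const_mul (cubicGaussianMean m s c0 c1 c2 c3)
    simpa [← sub_eq_add_neg] using hPhi.neg.sub
      ((tendsto_cubicGaussianStein_mul_normalPDF_cocompact m c1 c2 c3 hs.ne').mono_left
        atTop_le_cocompact)
  rw [integral_Ioi_of_hasDerivAt_of_tendsto' (fun x _ => hderiv x)
    (integrable_cubic_mul_normalPDF m c0 c1 c2 c3 hs.ne').integrableOn hlim]
  ring

end CubicMoments

lemma integral_eq_setIntegral_Iic_add_setIntegral_Ioi_of_eqOn {E : Type*} [NormedAddCommGroup E]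
    [NormedSpace ℝ E] {μ : Measure ℝ} {f g h : ℝ → E} {a : ℝ} (hg : IntegrableOn g (Iic a) μ)
    (hh : IntegrableOn h (Ioi a) μ) (hfg : EqOn f g (Iic a)) (hfh : EqOn f h (Ioi a)) :
    ∫ x, f x ∂μ = ∫ x in Iic a, g x ∂μ + ∫ x in Ioi a, h x ∂μ := by
  rw [← intervalIntegral.integral_Iic_add_Ioi (hg.congr_fun hfg.symm measurableSet_Iic)
    (hh.congr_fun hfh.symm measurableSet_Ioi), setIntegral_congr_fun measurableSet_Iic hfg,
    setIntegral_congr_fun measurableSet_Ioi hfh]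

lemma exp_mul_mul_normalPDF (c m : ℝ) {s : ℝ} (hs : s ≠ 0) (x : ℝ) :
    exp (c * x) * normalPDF m s x =
      exp (c * m + c ^ 2 * s ^ 2 / 2) * normalPDF (m + c * s ^ 2) s x := by
  simp only [normalPDF]
  rw [mul_left_comm, ← exp_add, mul_left_comm (exp _), ← exp_add]
  congr 2
  field_simp
  ring

lemma exp_neg_mul_abs_sub_mul_normalPDF_of_le (c m : ℝ) {s a x : ℝ} (hs : s ≠ 0) (hx : x ≤ a) :
    exp (-c * |x - a|) * normalPDF m s x =
      exp (c * (m - a) + c ^ 2 * s ^ 2 / 2) * normalPDF (m + c * s ^ 2) s x := by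
  rw [abs_of_nonpos (sub_nonpos.2 hx), show -c * -(x - a) = -(c * a) + c * x by ring, exp_add,
    mul_assoc, exp_mul_mul_normalPDF c m hs, ← mul_assoc, ← exp_add]
  ring_nf

lemma exp_neg_mul_abs_sub_mul_normalPDF_of_ge (c m : ℝ) {s a x : ℝ} (hs : s ≠ 0) (hx : a ≤ x) :
    exp (-c * |x - a|) * normalPDF m s x =
      exp (c * (a - m) + c ^ 2 * s ^ 2 / 2) * normalPDF (m - c * s ^ 2) s x := by
  rw [abs_of_nonneg (sub_nonneg.2 hx), show -c * (x - a) = c * a + -c * x by ring, exp_add,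
    mul_assoc, exp_mul_mul_normalPDF (-c) m hs, ← mul_assoc, ← exp_add]
  ring_nf

noncomputable def matern25 (γ w a : ℝ) : ℝ :=
  (1 + √5 * |w - a| / γ + 5 * (w - a) ^ 2 / (3 * γ ^ 2)) * exp (-√5 * |w - a| / γ)

section Matern25

variable {γ σ : ℝ} (μ : ℝ) {a w : ℝ}

lemma id_mul_matern25_mul_normalPDF_of_le (hγ : γ ≠ 0) (hσ : σ ≠ 0) (hw : w ≤ a) :
    w * matern25 γ w a * normalPDF μ σ w =
      exp ((5 * σ ^ 2 - 2 * √5 * γ * (a - μ)) / (2 * γ ^ 2)) *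
        ((0 + (1 + √5 * a / γ + 5 * a ^ 2 / (3 * γ ^ 2)) * w +
          -(√5 / γ + 10 * a / (3 * γ ^ 2)) * w ^ 2 + 5 / (3 * γ ^ 2) * w ^ 3) *
            normalPDF (μ + √5 * σ ^ 2 / γ) σ w) := by
  have h5 : √5 ^ 2 = 5 := sq_sqrt (by norm_num)
  have hE := exp_neg_mul_abs_sub_mul_normalPDF_of_le (√5 / γ) μ hσ hw
  rw [show √5 / γ * (μ - a) + (√5 / γ) ^ 2 * σ ^ 2 / 2 =
      (5 * σ ^ 2 - 2 * √5 * γ * (a - μ)) / (2 * γ ^ 2) by rw [div_pow, h5]; field_simp; ring,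
    show μ + √5 / γ * σ ^ 2 = μ + √5 * σ ^ 2 / γ by ring,
    abs_of_nonpos (sub_nonpos.2 hw)] at hE
  rw [matern25, show -√5 * |w - a| / γ = -(√5 / γ) * |w - a| by ring,
    abs_of_nonpos (sub_nonpos.2 hw)]
  linear_combination (w * (1 + √5 * -(w - a) / γ + 5 * (w - a) ^ 2 / (3 * γ ^ 2))) * hE

lemma id_mul_matern25_mul_normalPDF_of_ge (hγ : γ ≠ 0) (hσ : σ ≠ 0) (hw : a ≤ w) :
    w * matern25 γ w a * normalPDF μ σ w =
      exp ((5 * σ ^ 2 + 2 * √5 * γ * (a - μ)) / (2 * γ ^ 2)) *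
        ((0 + (1 - √5 * a / γ + 5 * a ^ 2 / (3 * γ ^ 2)) * w +
          (√5 / γ - 10 * a / (3 * γ ^ 2)) * w ^ 2 + 5 / (3 * γ ^ 2) * w ^ 3) *
            normalPDF (μ - √5 * σ ^ 2 / γ) σ w) := by
  have h5 : √5 ^ 2 = 5 := sq_sqrt (by norm_num)
  have hE := exp_neg_mul_abs_sub_mul_normalPDF_of_ge (√5 / γ) μ hσ hw
  rw [show √5 / γ * (a - μ) + (√5 / γ) ^ 2 * σ ^ 2 / 2 =
      (5 * σ ^ 2 + 2 * √5 * γ * (a - μ)) / (2 * γ ^ 2) by rw [div_pow, h5]; field_simp; ring,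
    show μ - √5 / γ * σ ^ 2 = μ - √5 * σ ^ 2 / γ by ring,
    abs_of_nonneg (sub_nonneg.2 hw)] at hE
  rw [matern25, show -√5 * |w - a| / γ = -(√5 / γ) * |w - a| by ring,
    abs_of_nonneg (sub_nonneg.2 hw)]
  linear_combination (w * (1 + √5 * (w - a) / γ + 5 * (w - a) ^ 2 / (3 * γ ^ 2))) * hE

end Matern25

theorem integral_id_mul_matern25_mul_normalPDF (γ σ μ a μA μB e10 e11 e12 e20 e21 e22 : ℝ)
    (hγ : 0 < γ) (hσ : 0 < σ)
    (hμA : μA = μ - Real.sqrt 5 * σ ^ 2 / γ) (hμB : μB = μ + Real.sqrt 5 * σ ^ 2 / γ)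
    (he10 : e10 = 1 - Real.sqrt 5 * a / γ + 5 * a ^ 2 / (3 * γ ^ 2))
    (he11 : e11 = Real.sqrt 5 / γ - 10 * a / (3 * γ ^ 2))
    (he12 : e12 = 5 / (3 * γ ^ 2))
    (he20 : e20 = 1 + Real.sqrt 5 * a / γ + 5 * a ^ 2 / (3 * γ ^ 2))
    (he21 : e21 = Real.sqrt 5 / γ + 10 * a / (3 * γ ^ 2))
    (he22 : e22 = 5 / (3 * γ ^ 2)) :
    ∫ w : ℝ,
        w * ((1 + Real.sqrt 5 * |w - a| / γ + 5 * (w - a) ^ 2 / (3 * γ ^ 2)) *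
          Real.exp (-(Real.sqrt 5) * |w - a| / γ)) * normalPDF μ σ w =
      Real.exp ((5 * σ ^ 2 + 2 * Real.sqrt 5 * γ * (a - μ)) / (2 * γ ^ 2)) *
        ((e10 * μA + e11 * (μA ^ 2 + σ ^ 2) + e12 * (μA ^ 3 + 3 * σ ^ 2 * μA)) *
            Phi ((μA - a) / σ) +
          (e10 + e11 * (μA + a) + e12 * (μA ^ 2 + 2 * σ ^ 2 + a ^ 2 + μA * a)) *
            (σ / Real.sqrt (2 * Real.pi)) * Real.exp (-(a - μA) ^ 2 / (2 * σ ^ 2))) -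
      Real.exp ((5 * σ ^ 2 - 2 * Real.sqrt 5 * γ * (a - μ)) / (2 * γ ^ 2)) *
        ((-(e20 * μB) + e21 * (μB ^ 2 + σ ^ 2) + e22 * (-μB ^ 3 - 3 * σ ^ 2 * μB)) *
            Phi ((a - μB) / σ) +
          (e20 + e21 * (-μB - a) + e22 * (μB ^ 2 + 2 * σ ^ 2 + a ^ 2 + μB * a)) *
            (σ / Real.sqrt (2 * Real.pi)) * Real.exp (-(a - μB) ^ 2 / (2 * σ ^ 2))) := by
  rw [integral_eq_setIntegral_Iic_add_setIntegral_Ioi_of_eqOn (a := a)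
    ((integrable_cubic_mul_normalPDF μB 0 e20 (-e21) e22 hσ.ne').const_mul
      (exp ((5 * σ ^ 2 - 2 * √5 * γ * (a - μ)) / (2 * γ ^ 2)))).integrableOn
    ((integrable_cubic_mul_normalPDF μA 0 e10 e11 e12 hσ.ne').const_mul
      (exp ((5 * σ ^ 2 + 2 * √5 * γ * (a - μ)) / (2 * γ ^ 2)))).integrableOn
    (fun w hw => ?_) (fun w hw => ?_), integral_const_mul, integral_const_mul,
    integral_Iic_cubic_mul_normalPDF _ _ _ _ _ hσ, integral_Ioi_cubic_mul_normalPDF _ _ _ _ _ hσ]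
  · simp only [cubicGaussianMean, cubicGaussianStein, normalPDF]
    field_simp
    ring
  · rw [hμB, he20, he21, he22]
    exact id_mul_matern25_mul_normalPDF_of_le μ hγ.ne' hσ.ne' hw
  · rw [hμA, he10, he11, he12]
    exact id_mul_matern25_mul_normalPDF_of_ge μ hγ.ne' hσ.ne' (le_of_lt hw)
end
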